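/- arXiv:1701.02015 — 3 statements merged into one kernel-verified Lean document; each statement's English description precedes it below -/
import Mathlib

section
/- The function ψ(x,y) = y + 2x^{1-β} + x^{2-2β}/y on (0,∞)² satisfies the sub-eigenfunction inequality y²(x^{2β} ∂²ψ/∂x² + 2ρ x^β ∂²ψ/∂x∂y + ∂²ψ/∂y²) ≤ 2ψ(x,y) for all x,y > 0, for every β ∈ [0,1] and ρ ∈ [-1,1]. -/
/-!
Computing the second derivatives of `ψ` explicitly, the powers of `x` in the generator combine to
`Aψ = -2β(1-β) x^(β-1) y² + 2(1-β)(1-2β) y - 4ρ(1-β) x^(1-β) + 2 x^(2-2β)/y`, so that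
`2ψ - Aψ = 2β(1-β) x^(β-1) y² + 2β(3-2β) y + 4(1+ρ(1-β)) x^(1-β)`,
a sum of nonnegative terms.
-/

open Real Filter Topology

theorem deriv_deriv_eq_of_eventually_hasDerivAt {f f' : ℝ → ℝ} {x f'' : ℝ}
    (hf : ∀ᶠ t in 𝓝 x, HasDerivAt f (f' t) t) (hf' : HasDerivAt f' f'' x) :
    deriv (deriv f) x = f'' := by
  have hderiv : deriv f =ᶠ[𝓝 x] f' := hf.mono fun _ ht => ht.deriv
  rw [hderiv.deriv_eq, hf'.deriv]

noncomputable def sabrWeight (β x y : ℝ) : ℝ := y + 2 * x ^ (1 - β) + x ^ (2 - 2 * β) / y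

noncomputable def sabrGenerator (β ρ : ℝ) (f : ℝ → ℝ → ℝ) (x y : ℝ) : ℝ :=
  y ^ 2 * (x ^ (2 * β) * deriv (fun t => deriv (fun s => f s y) t) x
    + 2 * ρ * x ^ β * deriv (fun t => deriv (fun s => f s t) x) y
    + deriv (fun t => deriv (fun s => f x s) t) y)

section
variable (β : ℝ)

theorem hasDerivAt_sabrWeight_fst (y : ℝ) {t : ℝ} (ht : t ≠ 0) :
    HasDerivAt (fun s => sabrWeight β s y)
      (2 * (1 - β) * t ^ (-β) + (2 - 2 * β) * t ^ (1 - 2 * β) / y) t := by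
  have h₁ := (hasDerivAt_rpow_const (p := 1 - β) (Or.inl ht)).const_mul 2
  have h₂ := (hasDerivAt_rpow_const (p := 2 - 2 * β) (Or.inl ht)).div_const y
  exact ((h₁.const_add y).add h₂).congr_deriv (by ring_nf)

theorem hasDerivAt_sabrWeight_snd (x : ℝ) {t : ℝ} (ht : t ≠ 0) :
    HasDerivAt (fun s => sabrWeight β x s) (1 - x ^ (2 - 2 * β) / t ^ 2) t := by
  have h := ((hasDerivAt_id t).add_const (2 * x ^ (1 - β))).add
    ((hasDerivAt_inv ht).const_mul (x ^ (2 - 2 * β)))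
  exact h.congr_deriv (by ring)

theorem deriv_deriv_sabrWeight_fst {x : ℝ} (hx : x ≠ 0) (y : ℝ) :
    deriv (deriv fun s => sabrWeight β s y) x =
      -(2 * β * (1 - β)) * x ^ (-β - 1) + (2 - 2 * β) * (1 - 2 * β) * x ^ (-(2 * β)) / y := by
  refine deriv_deriv_eq_of_eventually_hasDerivAt
    ((eventually_ne_nhds hx).mono fun t ht => hasDerivAt_sabrWeight_fst β y ht) ?_
  have h₁ := (hasDerivAt_rpow_const (p := -β) (Or.inl hx)).const_mul (2 * (1 - β))
  have h₂ :=
    ((hasDerivAt_rpow_const (p := 1 - 2 * β) (Or.inl hx)).const_mul (2 - 2 * β)).div_const y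
  exact (h₁.add h₂).congr_deriv (by ring_nf)

theorem deriv_deriv_sabrWeight_fst_snd {x : ℝ} (hx : x ≠ 0) {y : ℝ} (hy : y ≠ 0) :
    deriv (fun t => deriv (fun s => sabrWeight β s t) x) y =
      -((2 - 2 * β) * x ^ (1 - 2 * β) / y ^ 2) := by
  have h : (fun t => deriv (fun s => sabrWeight β s t) x) =
      fun t => 2 * (1 - β) * x ^ (-β) + (2 - 2 * β) * x ^ (1 - 2 * β) * t⁻¹ := by
    ext t
    rw [(hasDerivAt_sabrWeight_fst β t hx).deriv, div_eq_mul_inv]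
  rw [h]
  convert (((hasDerivAt_inv hy).const_mul ((2 - 2 * β) * x ^ (1 - 2 * β))).const_add _).deriv
    using 1
  ring

theorem deriv_deriv_sabrWeight_snd (x : ℝ) {y : ℝ} (hy : y ≠ 0) :
    deriv (deriv fun s => sabrWeight β x s) y = 2 * x ^ (2 - 2 * β) / y ^ 3 := by
  refine deriv_deriv_eq_of_eventually_hasDerivAt
    ((eventually_ne_nhds hy).mono fun t ht => hasDerivAt_sabrWeight_snd β x ht) ?_
  have h := (hasDerivAt_const y (x ^ (2 - 2 * β))).div (hasDerivAt_pow 2 y) (pow_ne_zero 2 hy)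
  exact (h.const_sub 1).congr_deriv (by field_simp; ring)

theorem sabrGenerator_sabrWeight (ρ : ℝ) {x y : ℝ} (hx : 0 < x) (hy : y ≠ 0) :
    sabrGenerator β ρ (sabrWeight β) x y =
      -(2 * β * (1 - β)) * x ^ (β - 1) * y ^ 2 + 2 * (1 - β) * (1 - 2 * β) * y
        - 4 * ρ * (1 - β) * x ^ (1 - β) + 2 * (x ^ (2 - 2 * β) / y) := by
  have e₁ : x ^ (2 * β) * x ^ (-β - 1) = x ^ (β - 1) := by rw [← rpow_add hx]; ring_nf
  have e₂ : x ^ (2 * β) * x ^ (-(2 * β)) = 1 := by rw [← rpow_add hx]; simp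
  have e₃ : x ^ β * x ^ (1 - 2 * β) = x ^ (1 - β) := by rw [← rpow_add hx]; ring_nf
  rw [sabrGenerator, deriv_deriv_sabrWeight_fst β hx.ne',
    deriv_deriv_sabrWeight_fst_snd β hx.ne' hy, deriv_deriv_sabrWeight_snd β x hy]
  field_simp
  linear_combination (-(2 * β * (1 - β)) * y ^ 3) * e₁
    + ((1 - β) * (2 - 4 * β) * y ^ 2) * e₂ - (4 * ρ * (1 - β) * y) * e₃

theorem sabrGenerator_sabrWeight_le {ρ x y : ℝ} (hβ : β ∈ Set.Icc (0 : ℝ) 1)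
    (hρ : -1 ≤ ρ) (hx : 0 < x) (hy : 0 < y) :
    sabrGenerator β ρ (sabrWeight β) x y ≤ 2 * sabrWeight β x y := by
  obtain ⟨hβ₀, hβ₁⟩ := hβ
  rw [sabrGenerator_sabrWeight β ρ hx hy.ne', sabrWeight]
  have h₁ : 0 ≤ β * (1 - β) * x ^ (β - 1) * y ^ 2 := by
    have := rpow_pos_of_pos hx (β - 1)
    have : 0 ≤ 1 - β := by linarith
    positivity
  have h₂ : 0 ≤ β * (3 - 2 * β) * y := by
    have : 0 ≤ 3 - 2 * β := by linarith
    positivity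
  have h₃ : 0 ≤ (1 + ρ * (1 - β)) * x ^ (1 - β) := by
    have := rpow_pos_of_pos hx (1 - β)
    have : 0 ≤ 1 + ρ * (1 - β) := by nlinarith
    positivity
  linarith

end

/-- The function `ψ(x,y) = y + 2 x^(1-β) + x^(2-2β)/y` is a sub-eigenfunction of the SABR
infinitesimal generator `A = y²(x^{2β} ∂ₓₓ + 2ρ x^β ∂ₓy + ∂yy)` with constant `2`, for all
`β ∈ [0,1]`, `ρ ∈ [-1,1]` and `x, y > 0`. -/
theorem sabr_adhoc_weight_subeigenfunction
    (β ρ : ℝ) (hβ : β ∈ Set.Icc (0:ℝ) 1) (hρ : ρ ∈ Set.Icc (-1:ℝ) 1)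
    (ψ : ℝ → ℝ → ℝ)
    (hψ : ∀ x y : ℝ, ψ x y = y + 2 * x ^ (1 - β) + x ^ (2 - 2*β) / y)
    (x y : ℝ) (hx : 0 < x) (hy : 0 < y) :
    y^2 * (x ^ (2*β) * deriv (fun t => deriv (fun s => ψ s y) t) x
      + 2 * ρ * x ^ β * deriv (fun t => deriv (fun s => ψ s t) x) y
      + deriv (fun t => deriv (fun s => ψ x s) t) y)
    ≤ 2 * ψ x y := by
  obtain rfl : ψ = sabrWeight β := funext₂ hψ
  exact sabrGenerator_sabrWeight_le β hβ hρ.1 hx hy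
end

section
/- The map φ(x̂, ŷ) = (x̂^{1-β}/((1-ρ²)^{1/2}(1-β)) − ρŷ/(1-ρ²)^{1/2}, ŷ) from the SABR plane S = (0,∞)² with metric g to the hyperbolic upper half-plane ℍ with metric h = (dx² + dy²)/y² is a local isometry, i.e., the pullback of h under φ equals g. -/
/-!
The map is a shear `(x, y) ↦ (f x - ρ y / ρ̄, y)` with `f' x = x^{-β} / ρ̄`, so its differential
sends `(a, b)` to `((a x^{-β} - ρ b) / ρ̄, b)`. Since `ρ² + ρ̄² = 1`, the sum of squares of these
components is `(a² x^{-2β} - 2ρ a b x^{-β} + b²) / (1 - ρ²)`, which is `y²` times `g(a, b)`.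
-/

open Real

lemma hasDerivAt_rpow_div_const_mul {p x : ℝ} (c : ℝ) (hx : x ≠ 0) (hp : p ≠ 0) :
    HasDerivAt (fun t => t ^ p / (c * p)) (x ^ (p - 1) / c) x := by
  refine ((hasDerivAt_rpow_const (Or.inl hx)).div_const (c * p)).congr_deriv ?_
  rw [mul_comm c p, mul_div_mul_left _ _ hp]

lemma fderiv_sub_prod_snd_apply {f g : ℝ → ℝ} {f' g' x y : ℝ} (hf : HasDerivAt f f' x)
    (hg : HasDerivAt g g' y) (a b : ℝ) :
    fderiv ℝ (fun p : ℝ × ℝ => (f p.1 - g p.2, p.2)) (x, y) (a, b) = (f' * a - g' * b, b) := by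
  have hf₁ := hf.comp_hasFDerivAt (x, y) (hasFDerivAt_fst (𝕜 := ℝ) (p := (x, y)))
  have hg₂ := hg.comp_hasFDerivAt (x, y) (hasFDerivAt_snd (𝕜 := ℝ) (p := (x, y)))
  have H : HasFDerivAt (fun p : ℝ × ℝ => (f p.1 - g p.2, p.2)) _ (x, y) :=
    (hf₁.sub hg₂).prodMk hasFDerivAt_snd
  simp [H.fderiv]

lemma div_sub_mul_sq_add_sq {ρ c : ℝ} (hc : c ^ 2 = 1 - ρ ^ 2) (hc0 : c ≠ 0) (s t : ℝ) :
    ((s - ρ * t) / c) ^ 2 + t ^ 2 = (s ^ 2 - 2 * ρ * s * t + t ^ 2) / (1 - ρ ^ 2) := by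
  rw [← hc]
  field_simp
  linear_combination t ^ 2 * hc

theorem sabr_plane_local_isometry_general
    (β ρ : ℝ) (hβ : β ∈ Set.Ico (0:ℝ) 1) (hρ : ρ ∈ Set.Ioo (-1:ℝ) 1)
    (φ : ℝ × ℝ → ℝ × ℝ)
    (hφ : ∀ p : ℝ × ℝ, φ p =
      (p.1 ^ (1 - β) / (Real.sqrt (1 - ρ^2) * (1 - β)) - ρ * p.2 / Real.sqrt (1 - ρ^2),
       p.2))
    (x y : ℝ) (hx : 0 < x) (a b : ℝ) :
    ((fderiv ℝ φ (x, y) (a, b)).1 ^ 2 + (fderiv ℝ φ (x, y) (a, b)).2 ^ 2)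
        / (φ (x, y)).2 ^ 2
      = (1 / (1 - ρ^2)) *
          (a^2 / (y^2 * x ^ (2*β)) - 2 * ρ * a * b / (y^2 * x ^ β) + b^2 / y^2) := by
  set c := √(1 - ρ ^ 2)
  have hρ2 : 0 < 1 - ρ ^ 2 := by nlinarith [hρ.1, hρ.2]
  have hc : c ^ 2 = 1 - ρ ^ 2 := sq_sqrt hρ2.le
  have hc0 : c ≠ 0 := (sqrt_pos.mpr hρ2).ne'
  have hf := hasDerivAt_rpow_div_const_mul c hx.ne' (sub_ne_zero.mpr hβ.2.ne')
  have hg : HasDerivAt (fun t => ρ * t / c) (ρ / c) y := by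
    simpa using ((hasDerivAt_id y).const_mul ρ).div_const c
  rw [funext hφ, fderiv_sub_prod_snd_apply hf hg,
    show (1 - β - 1) = -β by ring, rpow_neg hx.le, mul_comm 2 β, rpow_mul hx.le, rpow_two]
  have key := div_sub_mul_sq_add_sq hc hc0 (a / x ^ β) b
  rw [show (x ^ β)⁻¹ / c * a - ρ / c * b = (a / x ^ β - ρ * b) / c by ring, key]
  ring

/-- The map `φ(x̂,ŷ) = (x̂^{1-β}/(ρ̄(1-β)) − ρŷ/ρ̄, ŷ)`, with `ρ̄ = √(1-ρ²)`, from the SABR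
plane `S = (0,∞)²` with metric `g` to the hyperbolic upper half-plane `(ℍ, h)`,
`h = (dx²+dy²)/y²`, is a local isometry: at every point `(x,y) ∈ S` and for every tangent
vector `(a,b)`, the value of `h` at `φ(x,y)` on the pushed-forward vector `Dφ(x,y)(a,b)`
equals the value of `g` at `(x,y)` on `(a,b)`. -/
theorem sabr_plane_local_isometry
    (β ρ : ℝ) (hβ : β ∈ Set.Ico (0:ℝ) 1) (hρ : ρ ∈ Set.Ioo (-1:ℝ) 1)
    (φ : ℝ × ℝ → ℝ × ℝ)
    (hφ : ∀ p : ℝ × ℝ, φ p =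
      (p.1 ^ (1 - β) / (Real.sqrt (1 - ρ^2) * (1 - β)) - ρ * p.2 / Real.sqrt (1 - ρ^2),
       p.2))
    (x y : ℝ) (hx : 0 < x) (hy : 0 < y) (a b : ℝ) :
    ((fderiv ℝ φ (x, y) (a, b)).1 ^ 2 + (fderiv ℝ φ (x, y) (a, b)).2 ^ 2)
        / (φ (x, y)).2 ^ 2
      = (1 / (1 - ρ^2)) *
          (a^2 / (y^2 * x ^ (2*β)) - 2 * ρ * a * b / (y^2 * x ^ β) + b^2 / y^2) :=
  sabr_plane_local_isometry_general β ρ hβ hρ φ hφ x y hx a b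
end

section
/- Suppose f : (0,∞)² → ℝ is differentiable and satisfies the system x^{2β−1}y²(2β + x∂_x f) + ρx^β y(2 + y∂_y f) = 0 and ρx^{β−1}y²(β + x∂_x f) + y(2 + y∂_y f) = 0 for all x,y > 0, where ρ ∈ (-1,1), ρ ≠ 0. Then necessarily β = 0 or β = 1. -/
open Real

/-! Subtracting `ρ x^β` times the second equation from the first leaves
`x^{2β-1} y² ((1 - ρ²)(β + x ∂ₓf) + β) = 0`, so `x ∂ₓf` is a constant `c`. Hence
`f(x, y) = f(1, y) + c log x`, and `∂_y f` does not depend on `x`. The second equation at `y = 1`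
then says that `ρ x^{β-1} (β + c)` is constant in `x`, where `(1 - ρ²)(β + c) = -β`: either
`β = 0`, or `x^{β-1}` is constant and `β = 1`. -/

theorem one_sub_sq_mul_add_eq_neg {x y β ρ a b : ℝ} (hx : 0 < x) (hy : 0 < y)
    (h1 : x ^ (2 * β - 1) * y ^ 2 * (2 * β + a) + ρ * x ^ β * y * b = 0)
    (h2 : ρ * x ^ (β - 1) * y ^ 2 * (β + a) + y * b = 0) :
    (1 - ρ ^ 2) * (β + a) = -β := by
  have hsplit : x ^ (2 * β - 1) = x ^ β * x ^ (β - 1) := by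
    rw [← rpow_add hx]; ring_nf
  have hcomb : x ^ β * x ^ (β - 1) * y ^ 2 * ((1 - ρ ^ 2) * (β + a) + β) = 0 := by
    rw [hsplit] at h1
    linear_combination h1 - ρ * x ^ β * h2
  have hpos : x ^ β * x ^ (β - 1) * y ^ 2 ≠ 0 := by positivity
  linear_combination (mul_eq_zero.mp hcomb).resolve_left hpos

theorem eq_add_mul_log_of_hasDerivAt {g : ℝ → ℝ} {c x : ℝ}
    (hg : ∀ z, 0 < z → HasDerivAt g (c / z) z) (hx : 0 < x) :
    g x = g 1 + c * log x := by
  have hderiv : ∀ z, 0 < z → HasDerivAt (fun s => g s - c * log s) 0 z := fun z hz => by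
    have hsub : HasDerivAt (fun s => g s - c * log s) (c / z - c * z⁻¹) z :=
      (hg z hz).sub ((hasDerivAt_log hz.ne').const_mul c)
    rwa [div_eq_mul_inv, sub_self] at hsub
  have hconst := isOpen_Ioi.is_const_of_deriv_eq_zero (convex_Ioi (0 : ℝ)).isPreconnected
    (fun z hz => (hderiv z hz).differentiableAt.differentiableWithinAt)
    (fun z hz => (hderiv z hz).deriv) (Set.mem_Ioi.mpr hx) (Set.mem_Ioi.mpr one_pos)
  simp only [log_one, mul_zero, sub_zero] at hconst
  linarith

theorem HasDerivAt.unique_of_eqOn_Ioi_add_const {g h : ℝ → ℝ} {a b k y : ℝ}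
    (hgh : ∀ t, 0 < t → g t = h t + k) (hy : 0 < y)
    (hg : HasDerivAt g a y) (hh : HasDerivAt h b y) : a = b := by
  have hev : (fun t => h t + k) =ᶠ[nhds y] g :=
    Filter.eventuallyEq_of_mem (Ioi_mem_nhds hy) fun t ht => (hgh t ht).symm
  exact hg.unique ((hh.add_const k).congr_of_eventuallyEq hev.symm)

theorem eq_zero_or_eq_zero_of_rpow_mul_eq_const {p m K : ℝ}
    (h : ∀ x, 0 < x → x ^ p * m = K) : m = 0 ∨ p = 0 := by
  have hone := h 1 one_pos
  rw [one_rpow, one_mul] at hone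
  have h12 : ((2 : ℝ) ^ p - 2 ^ (0 : ℝ)) * m = 0 := by
    rw [rpow_zero]; linear_combination h 2 two_pos - hone
  rcases mul_eq_zero.mp h12 with h2 | hm
  · exact Or.inr ((rpow_right_inj two_pos (by norm_num)).mp (sub_eq_zero.mp h2))
  · exact Or.inl hm

theorem sabr_symmetrizing_measure_forces_beta_general
    (β ρ : ℝ) (hρ : ρ ∈ Set.Ioo (-1:ℝ) 1) (hρ0 : ρ ≠ 0)
    (f fx fy : ℝ → ℝ → ℝ)
    (hfx : ∀ x y : ℝ, 0 < x → 0 < y → HasDerivAt (fun t => f t y) (fx x y) x)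
    (hfy : ∀ x y : ℝ, 0 < x → 0 < y → HasDerivAt (fun t => f x t) (fy x y) y)
    (h1 : ∀ x y : ℝ, 0 < x → 0 < y →
      x ^ (2*β - 1) * y^2 * (2*β + x * fx x y) + ρ * x ^ β * y * (2 + y * fy x y) = 0)
    (h2 : ∀ x y : ℝ, 0 < x → 0 < y →
      ρ * x ^ (β - 1) * y^2 * (β + x * fx x y) + y * (2 + y * fy x y) = 0) :
    β = 0 ∨ β = 1 := by
  have hρsq : 1 - ρ ^ 2 ≠ 0 := by nlinarith [hρ.1, hρ.2]
  set m := -β / (1 - ρ ^ 2) with hm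
  have hxfx : ∀ x y, 0 < x → 0 < y → x * fx x y = m - β := fun x y hx hy => by
    have := one_sub_sq_mul_add_eq_neg hx hy (h1 x y hx hy) (h2 x y hx hy)
    rw [hm, eq_sub_iff_add_eq, eq_div_iff hρsq]; linear_combination this
  have hlog : ∀ x t, 0 < x → 0 < t → f x t = f 1 t + (m - β) * log x := fun x t hx ht =>
    eq_add_mul_log_of_hasDerivAt (g := fun s => f s t) (fun z hz => (hfx z t hz ht).congr_deriv
      (by rw [eq_div_iff hz.ne', mul_comm, hxfx z t hz ht])) hx
  have hfy1 : ∀ x, 0 < x → fy x 1 = fy 1 1 := fun x hx =>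
    (hfy x 1 hx one_pos).unique_of_eqOn_Ioi_add_const (fun t ht => hlog x t hx ht) one_pos
      (hfy 1 1 one_pos one_pos)
  have hconst : ∀ x, 0 < x → x ^ (β - 1) * (ρ * m) = -(2 + fy 1 1) := fun x hx => by
    have := h2 x 1 hx one_pos
    rw [hfy1 x hx, hxfx x 1 hx one_pos] at this
    linear_combination this
  rcases eq_zero_or_eq_zero_of_rpow_mul_eq_const hconst with h | h
  · left
    have : m = 0 := (mul_eq_zero.mp h).resolve_left hρ0
    simpa [hm, hρsq] using this
  · right; linarith

/-- No-drift condition for a symmetrizing measure of the SABR generator: if `f` is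
differentiable on `(0,∞)²` (with partial derivatives `fx`, `fy`) and satisfies the system
`x^{2β−1}y²(2β + x∂ₓf) + ρx^β y(2 + y∂_yf) = 0` and
`ρx^{β−1}y²(β + x∂ₓf) + y(2 + y∂_yf) = 0` for all `x,y > 0`, where `ρ ∈ (-1,1)`, `ρ ≠ 0`
and `β ∈ [0,1]`, then necessarily `β = 0` or `β = 1`. -/
theorem sabr_symmetrizing_measure_forces_beta
    (β ρ : ℝ) (hβ : β ∈ Set.Icc (0:ℝ) 1) (hρ : ρ ∈ Set.Ioo (-1:ℝ) 1) (hρ0 : ρ ≠ 0)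
    (f fx fy : ℝ → ℝ → ℝ)
    (hfx : ∀ x y : ℝ, 0 < x → 0 < y → HasDerivAt (fun t => f t y) (fx x y) x)
    (hfy : ∀ x y : ℝ, 0 < x → 0 < y → HasDerivAt (fun t => f x t) (fy x y) y)
    (h1 : ∀ x y : ℝ, 0 < x → 0 < y →
      x ^ (2*β - 1) * y^2 * (2*β + x * fx x y) + ρ * x ^ β * y * (2 + y * fy x y) = 0)
    (h2 : ∀ x y : ℝ, 0 < x → 0 < y →
      ρ * x ^ (β - 1) * y^2 * (β + x * fx x y) + y * (2 + y * fy x y) = 0) :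
    β = 0 ∨ β = 1 :=
  sabr_symmetrizing_measure_forces_beta_general β ρ hρ hρ0 f fx fy hfx hfy h1 h2
end
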